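/- arXiv:math/0207194 — 3 statements merged into one kernel-verified Lean document; each statement's English description precedes it below -/
import Mathlib

section
/- Let G be a finite group acting by ring automorphisms on a commutative ring A such that the order |G| (i.e. the image of the integer |G| in A) is a unit of A, and let m ⊆ A be a G-invariant ideal. Then η_G(m) ≤ |G|. -/
/-- The ideal generated by the `G`-invariant elements of a (`G`-invariant) ideal `m`. -/
def invIdeal (G : Type*) {A : Type*} [Group G] [CommRing A] [MulSemiringAction G A]
    (m : Ideal A) : Ideal A :=
  Ideal.span {a : A | a ∈ m ∧ ∀ g : G, g • a = a}

/-- `η_G(m) = inf { d : m ^ d ⊆ ⟨m^G⟩ }`, as an element of `ℕ ∪ {∞}`. -/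
noncomputable def eta (G : Type*) {A : Type*} [Group G] [CommRing A] [MulSemiringAction G A]
    (m : Ideal A) : ℕ∞ :=
  sInf ((↑) '' {d : ℕ | m ^ d ≤ invIdeal G m})

section Aux

variable {G A : Type} [Group G] [CommRing A] [MulSemiringAction G A]

/-- The transfer of an element of `m` lies in `invIdeal G m`. -/
lemma aux_tr_mem [Fintype G] (m : Ideal A) (hm : ∀ (g : G), ∀ a ∈ m, g • a ∈ m)
    (a : A) (ha : a ∈ m) : ∑ g : G, g • a ∈ invIdeal G m := by
  refine Ideal.subset_span ⟨Ideal.sum_mem m fun g _ => hm g a ha, fun h => ?_⟩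
  rw [Finset.smul_sum]
  exact Fintype.sum_equiv (Equiv.mulLeft h) _ _ fun g => by rw [smul_smul, Equiv.coe_mulLeft]

/-- Key lemma: a product of `|G|` elements of `m` lies in `invIdeal G m`. -/
lemma aux_prod_mem [Fintype G] (m : Ideal A) (hm : ∀ (g : G), ∀ a ∈ m, g • a ∈ m)
    (hunit : IsUnit ((Nat.card G : A))) (a : G → A) (ha : ∀ g, a g ∈ m) :
    ∏ g : G, a g ∈ invIdeal G m := by
  classical
  set I := invIdeal G m with hI
  set c : G → A := fun g => g⁻¹ • a g with hc
  have hcm : ∀ g, c g ∈ m := fun g => hm _ _ (ha g)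
  have key : (0 : A) = ∑ h : G, ∏ g : G, (h • c g + -(a g)) := by
    rw [eq_comm]
    refine Finset.sum_eq_zero fun h _ => Finset.prod_eq_zero (Finset.mem_univ h) ?_
    simp [hc, smul_smul]
  rw [Finset.sum_congr rfl
    (fun h _ => Finset.prod_add (fun g => h • c g) (fun g => -(a g)) Finset.univ)] at key
  rw [Finset.sum_comm] at key
  have key2 : (0 : A) = ∑ t ∈ Finset.univ.powerset,
      (∑ h : G, h • ∏ g ∈ t, c g) * ∏ g ∈ Finset.univ \ t, -(a g) := by
    rw [key]
    refine Finset.sum_congr rfl fun t _ => ?_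
    rw [Finset.sum_mul]
    refine Finset.sum_congr rfl fun h _ => ?_
    rw [Finset.smul_prod']
  have hmem : ∀ t ∈ Finset.univ.powerset, t ≠ ∅ →
      (∑ h : G, h • ∏ g ∈ t, c g) * ∏ g ∈ Finset.univ \ t, -(a g) ∈ I := by
    intro t _ ht
    obtain ⟨x, hx⟩ := Finset.nonempty_iff_ne_empty.2 ht
    refine Ideal.mul_mem_right _ _ (aux_tr_mem m hm _ ?_)
    rw [← Finset.mul_prod_erase t c hx]
    exact Ideal.mul_mem_right _ _ (hcm x)
  have hsub : (Finset.univ : Finset G).powerset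
      = insert ∅ (Finset.univ.powerset.erase ∅) := by
    rw [Finset.insert_erase (Finset.empty_mem_powerset _)]
  rw [hsub, Finset.sum_insert (Finset.notMem_erase _ _)] at key2
  have hrest : ∑ t ∈ Finset.univ.powerset.erase ∅,
      (∑ h : G, h • ∏ g ∈ t, c g) * ∏ g ∈ Finset.univ \ t, -(a g) ∈ I :=
    Ideal.sum_mem _ fun t htm =>
      hmem t (Finset.mem_of_mem_erase htm) (Finset.ne_of_mem_erase htm)
  have hempty : (∑ h : G, h • ∏ g ∈ (∅ : Finset G), c g)
      * ∏ g ∈ Finset.univ \ (∅ : Finset G), -(a g)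
      = (Nat.card G : A) * ∏ g : G, -(a g) := by
    simp [Nat.card_eq_fintype_card, Finset.card_univ]
  rw [hempty] at key2
  have hmain : (Nat.card G : A) * ∏ g : G, -(a g) ∈ I := by
    have hneg := I.neg_mem hrest
    have : (Nat.card G : A) * ∏ g : G, -(a g) =
        -(∑ t ∈ Finset.univ.powerset.erase ∅,
          (∑ h : G, h • ∏ g ∈ t, c g) * ∏ g ∈ Finset.univ \ t, -(a g)) := by
      linear_combination -key2
    rw [this]
    exact hneg
  have hprodneg : (∏ g : G, -(a g)) = (-1 : A)^(Fintype.card G) * ∏ g : G, a g := by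
    have : ∀ g : G, -(a g) = (-1 : A) * a g := fun g => by ring
    rw [Finset.prod_congr rfl fun g _ => this g, Finset.prod_mul_distrib,
      Finset.prod_const, Finset.card_univ]
  rw [hprodneg] at hmain
  have hsq : ((-1 : A)^(Fintype.card G)) * ((-1 : A)^(Fintype.card G)) = 1 := by
    rw [← pow_add]
    exact Even.neg_one_pow ⟨Fintype.card G, rfl⟩
  have h2 : (Nat.card G : A) * ∏ g : G, a g ∈ I := by
    have h3 := I.mul_mem_left ((-1 : A)^(Fintype.card G)) hmain
    have heq : (-1 : A)^(Fintype.card G)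
        * ((Nat.card G : A) * ((-1 : A)^(Fintype.card G) * ∏ g : G, a g))
        = (Nat.card G : A) * ∏ g : G, a g := by
      linear_combination ((Nat.card G : A) * ∏ g : G, a g) * hsq
    rwa [heq] at h3
  obtain ⟨u, hu⟩ := hunit
  have : (∏ g : G, a g) = (↑u⁻¹ : A) * ((Nat.card G : A) * ∏ g : G, a g) := by
    rw [← hu, ← mul_assoc, Units.inv_mul, one_mul]
  rw [this]
  exact I.mul_mem_left _ h2

/-- `m ^ k` is contained in the span of `k`-fold products of elements of `m`. -/
lemma aux_pow_le_span_prod (m : Ideal A) (k : ℕ) :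
    m ^ k ≤ Ideal.span {x : A | ∃ f : Fin k → A, (∀ i, f i ∈ m) ∧ x = ∏ i, f i} := by
  induction k with
  | zero =>
    rw [pow_zero, Ideal.one_eq_top]
    have h1 : (1 : A) ∈ {x : A | ∃ f : Fin 0 → A, (∀ i, f i ∈ m) ∧ x = ∏ i, f i} :=
      ⟨Fin.elim0, fun i => i.elim0, by simp⟩
    rw [(Ideal.eq_top_iff_one _).2 (Ideal.subset_span h1)]
  | succ k ih =>
    rw [pow_succ]
    refine Ideal.mul_le.2 fun r hr s hs => ?_
    replace hr := ih hr
    induction hr using Submodule.span_induction with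
    | mem x hx =>
      obtain ⟨f, hf, rfl⟩ := hx
      refine Ideal.subset_span ⟨Fin.cons s f, fun i => Fin.cases hs hf i, ?_⟩
      rw [Fin.prod_cons, mul_comm]
    | zero => rw [zero_mul]; exact Ideal.zero_mem _
    | add x y _ _ hx hy => rw [add_mul]; exact Ideal.add_mem _ hx hy
    | smul r x _ hx =>
      rw [smul_eq_mul, mul_assoc]
      exact Ideal.mul_mem_left _ _ hx

end Aux

/-- If `G` is a finite group acting by ring automorphisms on a
commutative ring `A` whose order is invertible in `A`, and `m` is a `G`-invariant
ideal, then `η_G(m) ≤ |G|`. -/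
theorem eta_le_card {G A : Type} [Group G] [Finite G] [CommRing A]
    [MulSemiringAction G A] (m : Ideal A) (hm : ∀ (g : G), ∀ a ∈ m, g • a ∈ m)
    (hunit : IsUnit ((Nat.card G : A))) :
    eta G m ≤ (Nat.card G : ℕ∞) := by
  have : Fintype G := Fintype.ofFinite G
  have hpow : m ^ (Nat.card G) ≤ invIdeal G m := by
    refine le_trans (aux_pow_le_span_prod m _) (Ideal.span_le.2 ?_)
    rintro x ⟨f, hf, rfl⟩
    have e := Finite.equivFin G
    have := aux_prod_mem m hm hunit (fun g => f (e g)) (fun g => hf (e g))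
    rwa [Equiv.prod_comp e f] at this
  exact sInf_le ⟨Nat.card G, hpow, rfl⟩
end

section
/- Let A = ⊕_{d≥0} A_d be a commutative ℕ-graded ring with an action of a finite group G by degree-preserving ring automorphisms, such that β(A) ≤ 1 and |G| is a unit of A. Let m := A_{≥1} = ⊕_{d≥1} A_d. Then β(A^G) ≤ η_G(m), where A^G carries the induced grading. -/
/-- For a family `𝒜` of "graded pieces" of `A` and a subring `B` of `A` which is graded
with respect to `𝒜` (e.g. `A` itself, or the invariants of a degree-preserving group
action), `beta 𝒜 B = inf {n : B is generated as a ring by its elements lying in some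
𝒜 d with d ≤ n}`, as an element of `ℕ ∪ {∞}`. -/
noncomputable def beta {A : Type*} [CommRing A] (𝒜 : ℕ → Set A) (B : Subring A) : ℕ∞ :=
  sInf ((↑) '' {n : ℕ | B ≤ Subring.closure {a : A | a ∈ B ∧ ∃ d ≤ n, a ∈ 𝒜 d}})

/-- The subring `A^G` of `G`-invariant elements. -/
def fixedSubring (G A : Type*) [Group G] [CommRing A] [MulSemiringAction G A] : Subring A where
  carrier := {a : A | ∀ g : G, g • a = a}
  mul_mem' := by intro a b ha hb; intro g; rw [smul_mul', ha g, hb g]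
  one_mem' := fun g => smul_one g
  add_mem' := by intro a b ha hb; intro g; rw [smul_add, ha g, hb g]
  zero_mem' := fun g => smul_zero g
  neg_mem' := by intro a ha g; rw [smul_neg, ha g]

/-! Let `m = A₊` and `m ^ n ≤ ⟨m^G⟩`. Since `A` is generated in degrees `≤ 1`, an invariant `x`
of degree `d > n` lies in `m ^ (n + 1) ≤ ⟨m^G⟩ m`, so it is a sum of terms `c q p` with `q`
invariant and `p` homogeneous, both of positive degree. The Reynolds operator
`ρ = |G|⁻¹ ∑ g` fixes `x`, preserves degrees and is `A^G`-linear, so taking the degree-`d` part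
and applying `ρ` writes `x` as a sum of products `ρ(c' p) q` of invariants of degree `< d`;
induction on `d` concludes. -/

open DirectSum
open scoped Ring

section Graded

variable {ι A σ : Type*} [DecidableEq ι] [AddMonoid ι] [Semiring A] [SetLike σ A]
  [AddSubmonoidClass σ A] (𝒜 : ι → σ) [GradedRing 𝒜]

theorem ringInverse_mem_zero {a : A} (ha : a ∈ 𝒜 0) : a⁻¹ʳ ∈ 𝒜 0 := by
  by_cases hunit : IsUnit a
  · have hright : a * (decompose 𝒜 a⁻¹ʳ 0 : A) = 1 := by
      rw [← coe_decompose_mul_of_left_mem_zero 𝒜 ha, Ring.mul_inverse_cancel a hunit,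
        decompose_of_mem_same 𝒜 SetLike.GradedOne.one_mem]
    have hinv : a⁻¹ʳ = decompose 𝒜 a⁻¹ʳ 0 := by
      simpa [hright] using Ring.inverse_mul_cancel_left a (decompose 𝒜 a⁻¹ʳ 0 : A) hunit
    exact hinv ▸ SetLike.coe_mem _
  · rw [Ring.inverse_non_unit a hunit]
    exact zero_mem _

theorem coe_decompose_map_of_mapsTo {f : A →+ A} (hf : ∀ i, ∀ a ∈ 𝒜 i, f a ∈ 𝒜 i)
    (x : A) (i : ι) : (decompose 𝒜 (f x) i : A) = f (decompose 𝒜 x i) := by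
  induction x using DirectSum.Decomposition.inductionOn 𝒜 with
  | zero => simp
  | @homogeneous j y =>
    obtain rfl | hji := eq_or_ne j i
    · rw [decompose_of_mem_same 𝒜 (hf j y y.2), decompose_of_mem_same 𝒜 y.2]
    · rw [decompose_of_mem_ne 𝒜 (hf j y y.2) hji, decompose_of_mem_ne 𝒜 y.2 hji, map_zero]
  | add y z hy hz =>
    simp only [map_add, decompose_add, DirectSum.add_apply, AddMemClass.coe_add, hy, hz]

end Graded

theorem smul_coe_decompose_of_smul_eq {G A ι σ : Type*} [Monoid G] [Semiring A]
    [DistribMulAction G A] [DecidableEq ι] [AddMonoid ι] [SetLike σ A] [AddSubmonoidClass σ A]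
    (𝒜 : ι → σ) [GradedRing 𝒜] (hdeg : ∀ (g : G) (i : ι), ∀ a ∈ 𝒜 i, g • a ∈ 𝒜 i)
    {g : G} {x : A} (hx : g • x = x) (i : ι) : g • (decompose 𝒜 x i : A) = decompose 𝒜 x i := by
  conv_rhs => rw [← hx]
  exact (coe_decompose_map_of_mapsTo 𝒜 (f := DistribSMul.toAddMonoidHom A g) (hdeg g) x i).symm

theorem smul_ringInverse_of_smul_eq {M A : Type*} [Monoid M] [Semiring A]
    [MulSemiringAction M A] {g : M} {a : A} (ha : g • a = a) : g • a⁻¹ʳ = a⁻¹ʳ := by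
  by_cases hunit : IsUnit a
  · calc g • a⁻¹ʳ = g • a⁻¹ʳ * (a * a⁻¹ʳ) := by rw [Ring.mul_inverse_cancel a hunit, mul_one]
      _ = g • (a⁻¹ʳ * a) * a⁻¹ʳ := by rw [smul_mul', ha, mul_assoc]
      _ = a⁻¹ʳ := by rw [Ring.inverse_mul_cancel a hunit, smul_one, one_mul]
  · rw [Ring.inverse_non_unit a hunit, smul_zero]

section Reynolds

variable (G : Type*) {A : Type*} [Group G] [Fintype G] [CommRing A] [MulSemiringAction G A]

noncomputable def reynolds : A →+ A where
  toFun y := (Nat.card G : A)⁻¹ʳ * ∑ g : G, g • y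
  map_zero' := by simp
  map_add' x y := by simp only [smul_add, Finset.sum_add_distrib, mul_add]

variable {G}

theorem reynolds_apply (y : A) : reynolds G y = (Nat.card G : A)⁻¹ʳ * ∑ g : G, g • y :=
  rfl

theorem reynolds_mem_fixedSubring (y : A) : reynolds G y ∈ fixedSubring G A := by
  intro g
  rw [reynolds_apply, smul_mul',
    smul_ringInverse_of_smul_eq (map_natCast (MulSemiringAction.toRingHom G A g) _),
    Finset.smul_sum]
  simp_rw [smul_smul]
  exact congrArg _ (Fintype.sum_equiv (Equiv.mulLeft g) _ _ fun _ => rfl)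

theorem reynolds_mul_of_mem_fixedSubring (y : A) {f : A} (hf : f ∈ fixedSubring G A) :
    reynolds G (y * f) = reynolds G y * f := by
  simp_rw [reynolds_apply, smul_mul', hf _, ← Finset.sum_mul, mul_assoc]

theorem reynolds_eq_self (hunit : IsUnit (Nat.card G : A)) {y : A} (hy : y ∈ fixedSubring G A) :
    reynolds G y = y := by
  simp_rw [reynolds_apply, hy _, Finset.sum_const, Finset.card_univ, ← Nat.card_eq_fintype_card,
    nsmul_eq_mul, Ring.inverse_mul_cancel_left _ _ hunit]

theorem reynolds_mem_graded {ι σ : Type*} [DecidableEq ι] [AddMonoid ι] [SetLike σ A]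
    [AddSubmonoidClass σ A] (𝒜 : ι → σ) [GradedRing 𝒜]
    (hdeg : ∀ (g : G) (i : ι), ∀ a ∈ 𝒜 i, g • a ∈ 𝒜 i) {y : A} {i : ι} (hy : y ∈ 𝒜 i) :
    reynolds G y ∈ 𝒜 i := by
  have hc : (Nat.card G : A)⁻¹ʳ ∈ 𝒜 0 := ringInverse_mem_zero 𝒜 (SetLike.natCast_mem_graded 𝒜 _)
  rw [reynolds_apply, ← zero_add i]
  exact SetLike.mul_mem_graded hc (sum_mem fun g _ => hdeg g i y hy)

end Reynolds

theorem le_closure_of_beta_le {A : Type*} [CommRing A] {𝒜 : ℕ → Set A} {B : Subring A} {n : ℕ}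
    (h : beta 𝒜 B ≤ n) : B ≤ Subring.closure {a | a ∈ B ∧ ∃ d ≤ n, a ∈ 𝒜 d} := by
  set S := {k : ℕ | B ≤ Subring.closure {a | a ∈ B ∧ ∃ d ≤ k, a ∈ 𝒜 d}}
  have hne : ((↑) '' S : Set ℕ∞).Nonempty := by
    by_contra hempty
    rw [Set.not_nonempty_iff_eq_empty] at hempty
    simp [beta, S, hempty] at h
  obtain ⟨k, hk, hkeq⟩ := csInf_mem hne
  have hkn : k ≤ n := by exact_mod_cast hkeq.trans_le h
  refine hk.trans (Subring.closure_mono ?_)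
  rintro a ⟨ha, d, hd, had⟩
  exact ⟨ha, d, hd.trans hkn, had⟩

theorem span_pos_degree_eq_irrelevant {A σ : Type*} [Semiring A] [SetLike σ A]
    [AddSubmonoidClass σ A] (𝒜 : ℕ → σ) [GradedRing 𝒜] :
    Ideal.span {a : A | ∃ d, 1 ≤ d ∧ a ∈ 𝒜 d} = (HomogeneousIdeal.irrelevant 𝒜).toIdeal := by
  rw [HomogeneousIdeal.irrelevant_eq_span]
  congr 1
  ext a
  simp [Nat.one_le_iff_ne_zero, pos_iff_ne_zero]

theorem span_subset_of_mul_mem {A : Type*} [CommSemiring A] {S : Set A} {T : AddSubmonoid A}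
    (h : ∀ c, ∀ s ∈ S, c * s ∈ T) : (Ideal.span S : Set A) ⊆ T := by
  intro x hx
  have hx' : x ∈ (Ideal.span S).toAddSubmonoid := hx
  rw [Ideal.span, Submodule.span_eq_closure] at hx'
  exact AddSubmonoid.closure_le.mpr (by rintro _ ⟨c, -, s, hs, rfl⟩; exact h c s hs) hx'

section Graded

variable {A σ : Type*} [CommRing A] [SetLike σ A] [AddSubgroupClass σ A] (𝒜 : ℕ → σ)
  [GradedRing 𝒜]

theorem coe_decompose_mem_pow_of_closure_eq_top
    (hgen : Subring.closure {a : A | ∃ d ≤ 1, a ∈ 𝒜 d} = ⊤) {I : Ideal A}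
    (hI : ∀ a ∈ 𝒜 1, a ∈ I) (x : A) (d : ℕ) : (decompose 𝒜 x d : A) ∈ I ^ d := by
  have hhom : ∀ y e, e ≤ 1 → y ∈ 𝒜 e → ∀ d, (decompose 𝒜 y d : A) ∈ I ^ d := by
    intro y e he hy d
    obtain rfl | hne := eq_or_ne e d
    · rw [decompose_of_mem_same 𝒜 hy]
      interval_cases e
      · simp
      · simpa using hI y hy
    · rw [decompose_of_mem_ne 𝒜 hy hne]
      exact zero_mem _
  have hx : x ∈ Subring.closure {a : A | ∃ d ≤ 1, a ∈ 𝒜 d} := hgen ▸ Subring.mem_top x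
  induction hx using Subring.closure_induction generalizing d with
  | mem y hy =>
    obtain ⟨e, he, hy⟩ := hy
    exact hhom y e he hy d
  | one => exact hhom 1 0 zero_le_one SetLike.GradedOne.one_mem d
  | zero => simp
  | add y z _ _ hy hz => simpa using add_mem (hy d) (hz d)
  | neg y _ hy =>
    rw [decompose_neg, DFinsupp.neg_apply, NegMemClass.coe_neg]
    exact neg_mem (hy d)
  | mul y z _ _ hy hz =>
    rw [decompose_mul, coe_mul_apply_eq_sum_antidiagonal]
    refine sum_mem fun ij hij => ?_
    rw [← Finset.HasAntidiagonal.mem_antidiagonal.mp hij, pow_add]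
    exact Ideal.mul_mem_mul (hy ij.1) (hz ij.2)

end Graded

section Invariants

open HomogeneousIdeal Pointwise

variable {G A σ : Type*} [Group G] [CommRing A] [MulSemiringAction G A]
  [SetLike σ A] [AddSubgroupClass σ A] (𝒜 : ℕ → σ) [GradedRing 𝒜]

theorem invIdeal_irrelevant_le_span (hdeg : ∀ (g : G) (i : ℕ), ∀ a ∈ 𝒜 i, g • a ∈ 𝒜 i) :
    invIdeal G (irrelevant 𝒜).toIdeal ≤
      Ideal.span {q | q ∈ fixedSubring G A ∧ ∃ j, 0 < j ∧ q ∈ 𝒜 j} := by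
  classical
  refine Ideal.span_le.mpr ?_
  rintro q ⟨hq, hqG⟩
  rw [← sum_support_decompose 𝒜 q]
  refine sum_mem fun j _ => ?_
  obtain rfl | hj := eq_or_ne j 0
  · rw [show (decompose 𝒜 q 0 : A) = 0 from hq]
    exact zero_mem _
  · exact Ideal.subset_span ⟨fun g => smul_coe_decompose_of_smul_eq 𝒜 hdeg (hqG g) j,
      j, pos_iff_ne_zero.mpr hj, SetLike.coe_mem _⟩

theorem reynolds_decompose_mul_mem [Fintype G]
    (hdeg : ∀ (g : G) (i : ℕ), ∀ a ∈ 𝒜 i, g • a ∈ 𝒜 i) {R : Subring A} {d : ℕ}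
    (hR : ∀ i < d, ∀ x ∈ 𝒜 i, x ∈ fixedSubring G A → x ∈ R) {q p : A} {j e : ℕ}
    (hj : 0 < j) (he : 0 < e) (hq : q ∈ 𝒜 j) (hqG : q ∈ fixedSubring G A) (hp : p ∈ 𝒜 e)
    (c : A) : reynolds G (decompose 𝒜 (c * (q * p)) d : A) ∈ R := by
  have hqp : q * p ∈ 𝒜 (j + e) := SetLike.mul_mem_graded hq hp
  by_cases hle : j + e ≤ d
  · set c' : A := (decompose 𝒜 c (d - (j + e)) : A)
    have hc' : c' * p ∈ 𝒜 (d - (j + e) + e) := SetLike.mul_mem_graded (SetLike.coe_mem _) hp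
    have hsplit : reynolds G (c' * (q * p)) = reynolds G (c' * p) * q := by
      rw [mul_comm q p, ← mul_assoc, reynolds_mul_of_mem_fixedSubring _ hqG]
    rw [coe_decompose_mul_of_right_mem_of_le 𝒜 hqp hle, hsplit]
    exact mul_mem
      (hR _ (by omega) _ (reynolds_mem_graded 𝒜 hdeg hc') (reynolds_mem_fixedSubring _))
      (hR j (by omega) q hq hqG)
  · rw [coe_decompose_mul_of_right_mem_of_not_le 𝒜 hqp hle, map_zero]
    exact zero_mem R

theorem mem_closure_of_mem_fixedSubring_of_mem_graded [Fintype G]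
    (hdeg : ∀ (g : G) (i : ℕ), ∀ a ∈ 𝒜 i, g • a ∈ 𝒜 i) (hunit : IsUnit (Nat.card G : A))
    (hgen : Subring.closure {a : A | ∃ d ≤ 1, a ∈ 𝒜 d} = ⊤) {n : ℕ}
    (hn : (irrelevant 𝒜).toIdeal ^ n ≤ invIdeal G (irrelevant 𝒜).toIdeal) (d : ℕ) :
    ∀ x ∈ 𝒜 d, x ∈ fixedSubring G A →
      x ∈ Subring.closure {a | a ∈ fixedSubring G A ∧ ∃ d ≤ n, a ∈ 𝒜 d} := by
  set R := Subring.closure {a | a ∈ fixedSubring G A ∧ ∃ d ≤ n, a ∈ 𝒜 d}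
  induction d using Nat.strong_induction_on with | _ d IH =>
  intro x hx hxG
  by_cases hdn : d ≤ n
  · exact Subring.subset_closure ⟨hxG, d, hdn, hx⟩
  set m := (irrelevant 𝒜).toIdeal
  have hxm : x ∈ m ^ (n + 1) := by
    have := coe_decompose_mem_pow_of_closure_eq_top 𝒜 hgen
      (fun a ha => mem_irrelevant_of_mem 𝒜 one_pos ha) x d
    rw [decompose_of_mem_same 𝒜 hx] at this
    exact Ideal.pow_le_pow_right (by omega) this
  have hspan : m ^ (n + 1) ≤
      Ideal.span ({q | q ∈ fixedSubring G A ∧ ∃ j, 0 < j ∧ q ∈ 𝒜 j} * ⋃ i > 0, (𝒜 i : Set A)) := by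
    rw [pow_succ, ← Ideal.span_mul_span', ← irrelevant_eq_span]
    exact Ideal.mul_mono_left (hn.trans (invIdeal_irrelevant_le_span 𝒜 hdeg))
  have hreynolds : reynolds G (decompose 𝒜 x d : A) ∈ R := by
    refine span_subset_of_mul_mem (T := (R.toAddSubgroup.comap
      ((reynolds G).comp (GradedRing.proj 𝒜 d))).toAddSubmonoid) ?_ (hspan hxm)
    rintro c _ ⟨q, ⟨hqG, j, hj, hq⟩, p, hp, rfl⟩
    simp only [Set.mem_iUnion] at hp
    obtain ⟨e, he, hp⟩ := hp
    exact reynolds_decompose_mul_mem 𝒜 hdeg IH hj he hq hqG hp c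
  rwa [decompose_of_mem_same 𝒜 hx, reynolds_eq_self hunit hxG] at hreynolds

theorem fixedSubring_le_closure [Fintype G]
    (hdeg : ∀ (g : G) (i : ℕ), ∀ a ∈ 𝒜 i, g • a ∈ 𝒜 i) (hunit : IsUnit (Nat.card G : A))
    (hgen : Subring.closure {a : A | ∃ d ≤ 1, a ∈ 𝒜 d} = ⊤) {n : ℕ}
    (hn : (irrelevant 𝒜).toIdeal ^ n ≤ invIdeal G (irrelevant 𝒜).toIdeal) :
    fixedSubring G A ≤ Subring.closure {a | a ∈ fixedSubring G A ∧ ∃ d ≤ n, a ∈ 𝒜 d} := by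
  classical
  intro x hx
  rw [← sum_support_decompose 𝒜 x]
  exact sum_mem fun j _ => mem_closure_of_mem_fixedSubring_of_mem_graded 𝒜 hdeg hunit hgen hn j
    _ (SetLike.coe_mem _) fun g => smul_coe_decompose_of_smul_eq 𝒜 hdeg (hx g) j

end Invariants

/-- Let `A = ⊕_{d ≥ 0} A_d` be a commutative `ℕ`-graded ring with an
action of a finite group `G` by degree-preserving ring automorphisms, such that
`β(A) ≤ 1` and `|G|` is a unit of `A`.  Let `m = A_{≥1}` (the ideal generated by the
homogeneous elements of positive degree).  Then `β(A^G) ≤ η_G(m)`, where `A^G`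
carries the induced grading. -/
theorem beta_fixed_le_eta {G A : Type} [Group G] [Finite G] [CommRing A]
    [MulSemiringAction G A] (𝒜 : ℕ → AddSubgroup A) [GradedRing 𝒜]
    (hdeg : ∀ (g : G) (d : ℕ), ∀ a ∈ 𝒜 d, g • a ∈ 𝒜 d)
    (hbeta : beta (fun d => (𝒜 d : Set A)) ⊤ ≤ 1)
    (hunit : IsUnit ((Nat.card G : A))) :
    beta (fun d => (𝒜 d : Set A)) (fixedSubring G A) ≤
      eta G (Ideal.span {a : A | ∃ d, 1 ≤ d ∧ a ∈ 𝒜 d}) := by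
  have : Fintype G := Fintype.ofFinite G
  have hgen : Subring.closure {a : A | ∃ d ≤ 1, a ∈ 𝒜 d} = ⊤ := by
    simpa [top_le_iff] using le_closure_of_beta_le (n := 1) hbeta
  rw [span_pos_degree_eq_irrelevant]
  refine le_sInf ?_
  rintro _ ⟨n, hn, rfl⟩
  exact sInf_le ⟨n, fixedSubring_le_closure 𝒜 hdeg hunit hgen hn, rfl⟩
end

section
/- Let A = ⊕_{d≥0} A_d be a commutative ℕ-graded ring with an action of a finite group G by degree-preserving ring automorphisms, and let m := A_{≥1}. Then η_G(m) ≤ β(A(G)^G), where A(G)^G carries the induced grading. -/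
/-- The subring of elements fixed by a family of ring endomorphisms. -/
def fixedSubringOf {R : Type*} [CommRing R] {G : Type*} (ρ : G → R →+* R) : Subring R where
  carrier := {a : R | ∀ g : G, ρ g a = a}
  mul_mem' := by intro a b ha hb g; rw [map_mul, ha g, hb g]
  one_mem' := fun g => map_one (ρ g)
  add_mem' := by intro a b ha hb g; rw [map_add, ha g, hb g]
  zero_mem' := fun g => map_zero (ρ g)
  neg_mem' := by intro a ha g; rw [map_neg, ha g]

/-- The action of `g ∈ G` on the polynomial ring `A(G) = A[x_h : h ∈ G]`:
it acts on the coefficients through its action on `A` and permutes the variables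
by `g • x_h = x_{gh}`. -/
noncomputable def AGmap {G A : Type*} [Group G] [CommRing A] [MulSemiringAction G A]
    (g : G) : MvPolynomial G A →+* MvPolynomial G A :=
  (MvPolynomial.rename (fun h : G => g * h)).toRingHom.comp
    (MvPolynomial.map (MulSemiringAction.toRingHom G A g))

/-- The grading of `A(G) = A[x_h : h ∈ G]` extending the grading `𝒜` of `A` with
`deg x_h = 1`: the degree-`n` piece is additively generated by the monomials
`a ⬝ x^μ` with `a` homogeneous of degree `d` in `A` and `d + |μ| = n`. -/
def AGgrading {G A : Type*} [Group G] [CommRing A] (𝒜 : ℕ → AddSubgroup A) (n : ℕ) :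
    Set (MvPolynomial G A) :=
  (AddSubgroup.closure {p : MvPolynomial G A |
    ∃ (d : ℕ) (a : A) (μ : G →₀ ℕ), a ∈ 𝒜 d ∧ d + μ.sum (fun _ e => e) = n ∧
      p = MvPolynomial.monomial μ a} : AddSubgroup (MvPolynomial G A))

/-!
If `A(G)^G` is generated in degrees `≤ n`, then all of it lies in the subring of `A(G)` of
polynomials whose terms `a x^μ` (`a` homogeneous of degree `c`) satisfy `c + |μ| ≤ n |μ|` modulo
the ideal `I` of `A` generated by the homogeneous invariants of positive degree: each generator
does (its terms with `μ = 0` form such an invariant), and the condition is multiplicative.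
The invariant `∑_g (g • w) x_g` has coefficient `w` at `x_1`, so every homogeneous `w` of
degree `≥ n` lies in `I`, whence `m ^ n ⊆ I ⊆ ⟨m^G⟩`.
-/

open MvPolynomial

section GradedPieces

variable {A : Type*} [CommRing A] (𝒜 : ℕ → AddSubgroup A) [GradedRing 𝒜]

theorem GradedRing.proj_mul_mem_of_forall {I : Ideal A} {a b : A} {c : ℕ}
    (h : ∀ i j, i + j = c → GradedRing.proj 𝒜 i a ∈ I ∨ GradedRing.proj 𝒜 j b ∈ I) :
    GradedRing.proj 𝒜 c (a * b) ∈ I := by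
  rw [GradedRing.proj_apply, DirectSum.decompose_mul,
    DirectSum.coe_mul_apply_eq_sum_antidiagonal]
  refine Ideal.sum_mem _ fun ij hij => ?_
  rcases h ij.1 ij.2 (Finset.HasAntidiagonal.mem_antidiagonal.mp hij) with ha | hb
  · exact I.mul_mem_right _ ha
  · exact I.mul_mem_left _ hb

theorem Ideal.span_homogeneous_pos_pow_le (n : ℕ) :
    Ideal.span {a : A | ∃ d, 1 ≤ d ∧ a ∈ 𝒜 d} ^ n ≤
      Ideal.span {a : A | ∃ d, n ≤ d ∧ a ∈ 𝒜 d} := by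
  rw [Ideal.span, Submodule.span_pow]
  refine Submodule.span_mono ?_
  induction n with
  | zero =>
    rintro _ rfl
    exact ⟨0, le_rfl, SetLike.one_mem_graded 𝒜⟩
  | succ k ih =>
    rintro _ ⟨x, hx, y, ⟨e, he, hy⟩, rfl⟩
    obtain ⟨d, hd, hx⟩ := ih hx
    exact ⟨d + e, by omega, SetLike.mul_mem_graded hx hy⟩

end GradedPieces

section Slope

variable {σ A : Type*} [CommRing A] (𝒜 : ℕ → AddSubgroup A) [GradedRing 𝒜]

/-- Polynomials whose terms `a x^μ`, `a ∈ 𝒜 c`, have `c + |μ| ≤ n |μ|` modulo `I`. The bound is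
`c ≤ (n - 1) |μ|` written without truncated subtraction, which would distort the case `n = 0`. -/
def slopeSubring (I : Ideal A) (n : ℕ) : Subring (MvPolynomial σ A) where
  carrier := {p | ∀ μ c, n * μ.degree < c + μ.degree → GradedRing.proj 𝒜 c (coeff μ p) ∈ I}
  zero_mem' _ _ _ := by simp
  one_mem' μ c hc := by
    classical
    rw [coeff_one]
    split_ifs with hμ
    · subst hμ
      rw [GradedRing.proj_apply, DirectSum.decompose_of_mem_ne 𝒜 (SetLike.one_mem_graded 𝒜)
        (by simpa using hc.ne)]
      exact zero_mem I
    · simp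
  add_mem' hp hq μ c hc := by
    rw [coeff_add, map_add]
    exact add_mem (hp μ c hc) (hq μ c hc)
  neg_mem' hp μ c hc := by
    rw [coeff_neg, map_neg]
    exact neg_mem (hp μ c hc)
  mul_mem' {p q} hp hq μ c hc := by
    classical
    rw [coeff_mul, map_sum]
    refine Ideal.sum_mem _ fun αβ hαβ => GradedRing.proj_mul_mem_of_forall 𝒜 fun i j hij => ?_
    have hμ := congrArg Finsupp.degree (Finset.HasAntidiagonal.mem_antidiagonal.mp hαβ)
    rw [map_add] at hμ
    by_cases hi : n * αβ.1.degree < i + αβ.1.degree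
    · exact .inl (hp _ _ hi)
    · refine .inr (hq _ _ ?_)
      rw [← hμ, mul_add] at hc
      omega

end Slope

section AG

variable {G A : Type*} [Group G] [CommRing A] [MulSemiringAction G A]

theorem AGmap_C_mul_X (g h : G) (a : A) : AGmap g (C a * X h) = C (g • a) * X (g * h) := by
  simp [AGmap]

theorem coeff_zero_AGmap (g : G) (p : MvPolynomial G A) : coeff 0 (AGmap g p) = g • coeff 0 p := by
  simp [AGmap, ← constantCoeff_eq, constantCoeff_rename, constantCoeff_map]

theorem sum_C_smul_mul_X_mem_fixedSubringOf [Fintype G] (w : A) :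
    ∑ g : G, C (g • w) * X g ∈ fixedSubringOf (AGmap (G := G) (A := A)) := by
  intro h
  simp only [map_sum, AGmap_C_mul_X, ← mul_smul]
  exact Equiv.sum_comp (Equiv.mulLeft h) fun g => C (g • w) * X g

theorem coeff_single_one_sum_C_smul_mul_X [Fintype G] (w : A) :
    coeff (Finsupp.single 1 1) (∑ g : G, C (g • w) * X g) = w := by
  classical
  simp [coeff_sum, coeff_C_mul, coeff_X, Finsupp.single_left_inj]

end AG

section AGgrading

variable {G A : Type*} [Group G] [CommRing A] (𝒜 : ℕ → AddSubgroup A)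

theorem coeff_mem_of_mem_AGgrading {p : MvPolynomial G A} {d c : ℕ} (hp : p ∈ AGgrading 𝒜 d)
    {μ : G →₀ ℕ} (hμ : c + μ.degree = d) : coeff μ p ∈ 𝒜 c := by
  classical
  refine (AddSubgroup.closure_le (K := (𝒜 c).comap (coeffAddMonoidHom μ)) |>.mpr ?_) hp
  rintro _ ⟨e, a, ν, ha, rfl, rfl⟩
  simp only [SetLike.mem_coe, AddSubgroup.mem_comap, coeffAddMonoidHom_apply, coeff_monomial]
  split_ifs with hνμ
  · subst hνμ
    rwa [show c = e by simpa [Finsupp.degree_apply, Finsupp.sum] using hμ]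
  · exact zero_mem _

theorem coeff_eq_zero_of_mem_AGgrading {p : MvPolynomial G A} {d : ℕ} (hp : p ∈ AGgrading 𝒜 d)
    {μ : G →₀ ℕ} (hμ : d < μ.degree) : coeff μ p = 0 := by
  classical
  refine (AddSubgroup.closure_le (K := (⊥ : AddSubgroup A).comap (coeffAddMonoidHom μ))
    |>.mpr ?_) hp
  rintro _ ⟨e, a, ν, -, rfl, rfl⟩
  simp only [SetLike.mem_coe, AddSubgroup.mem_comap, coeffAddMonoidHom_apply, coeff_monomial,
    AddSubgroup.mem_bot]
  split_ifs with hνμ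
  · subst hνμ
    simp [Finsupp.degree_apply, Finsupp.sum] at hμ
  · rfl

end AGgrading

section Invariants

variable {A : Type*} [CommRing A] (𝒜 : ℕ → AddSubgroup A)

def hilbertIdeal (G : Type*) [Group G] [MulSemiringAction G A] : Ideal A :=
  Ideal.span {a : A | (∃ d, 1 ≤ d ∧ a ∈ 𝒜 d) ∧ ∀ g : G, g • a = a}

variable {G : Type*} [Group G] [MulSemiringAction G A]

theorem hilbertIdeal_le_invIdeal :
    hilbertIdeal 𝒜 G ≤ invIdeal G (Ideal.span {a : A | ∃ d, 1 ≤ d ∧ a ∈ 𝒜 d}) :=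
  Ideal.span_mono fun _ ha => ⟨Ideal.subset_span ha.1, ha.2⟩

variable [GradedRing 𝒜]

theorem mem_slopeSubring_of_mem_AGgrading {p : MvPolynomial G A} {d n : ℕ}
    (hp : p ∈ fixedSubringOf (AGmap (G := G) (A := A))) (hpd : p ∈ AGgrading 𝒜 d) (hdn : d ≤ n) :
    p ∈ slopeSubring 𝒜 (hilbertIdeal 𝒜 G) n := by
  intro μ c hc
  rcases eq_or_ne μ 0 with rfl | hμ
  · have hc0 : 0 < c := by simpa using hc
    have hp0 : coeff 0 p ∈ 𝒜 d := coeff_mem_of_mem_AGgrading 𝒜 hpd (by simp)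
    rw [GradedRing.proj_apply]
    rcases eq_or_ne c d with rfl | hcd
    · rw [DirectSum.decompose_of_mem_same 𝒜 hp0]
      exact Ideal.subset_span ⟨⟨c, hc0, hp0⟩, fun g => by rw [← coeff_zero_AGmap, hp g]⟩
    · rw [DirectSum.decompose_of_mem_ne 𝒜 hp0 hcd.symm]
      exact zero_mem _
  · have hμ1 : 1 ≤ μ.degree :=
      Nat.one_le_iff_ne_zero.mpr ((Finsupp.degree_eq_zero_iff μ).not.mpr hμ)
    rcases le_or_gt μ.degree d with hle | hlt
    · have hn : n ≤ n * μ.degree := Nat.le_mul_of_pos_right n hμ1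
      have hcoeff : coeff μ p ∈ 𝒜 (d - μ.degree) :=
        coeff_mem_of_mem_AGgrading 𝒜 hpd (Nat.sub_add_cancel hle)
      rw [GradedRing.proj_apply, DirectSum.decompose_of_mem_ne 𝒜 hcoeff (by omega)]
      exact zero_mem _
    · rw [coeff_eq_zero_of_mem_AGgrading 𝒜 hpd hlt, map_zero]
      exact zero_mem _

theorem mem_hilbertIdeal_of_le_degree [Finite G] {n E : ℕ}
    (hn : fixedSubringOf (AGmap (G := G) (A := A)) ≤ Subring.closure {p : MvPolynomial G A |
      p ∈ fixedSubringOf (AGmap (G := G) (A := A)) ∧ ∃ d ≤ n, p ∈ AGgrading 𝒜 d})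
    {w : A} (hw : w ∈ 𝒜 E) (hE : n ≤ E) : w ∈ hilbertIdeal 𝒜 G := by
  have := Fintype.ofFinite G
  have hslope : fixedSubringOf (AGmap (G := G) (A := A)) ≤ slopeSubring 𝒜 (hilbertIdeal 𝒜 G) n :=
    hn.trans <| Subring.closure_le.mpr fun p ⟨hp, d, hdn, hpd⟩ =>
      mem_slopeSubring_of_mem_AGgrading 𝒜 hp hpd hdn
  have hcoeff := hslope (sum_C_smul_mul_X_mem_fixedSubringOf w) (Finsupp.single 1 1) E
    (by rw [Finsupp.degree_single]; omega)
  rwa [coeff_single_one_sum_C_smul_mul_X, GradedRing.proj_apply,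
    DirectSum.decompose_of_mem_same 𝒜 hw] at hcoeff

end Invariants

theorem eta_le_beta_AG_general {G A : Type} [Group G] [Finite G] [CommRing A]
    [MulSemiringAction G A] (𝒜 : ℕ → AddSubgroup A) [GradedRing 𝒜] :
    eta G (Ideal.span {a : A | ∃ d, 1 ≤ d ∧ a ∈ 𝒜 d}) ≤
      beta (AGgrading 𝒜) (fixedSubringOf (AGmap (G := G) (A := A))) := by
  refine sInf_le_sInf <| Set.image_mono fun n hn => ?_
  calc Ideal.span {a : A | ∃ d, 1 ≤ d ∧ a ∈ 𝒜 d} ^ n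
      ≤ Ideal.span {a : A | ∃ d, n ≤ d ∧ a ∈ 𝒜 d} := Ideal.span_homogeneous_pos_pow_le 𝒜 n
    _ ≤ hilbertIdeal 𝒜 G :=
      Ideal.span_le.mpr fun w ⟨E, hE, hw⟩ => mem_hilbertIdeal_of_le_degree 𝒜 hn hw hE
    _ ≤ invIdeal G _ := hilbertIdeal_le_invIdeal 𝒜

/-- Let `A` be a commutative `ℕ`-graded ring with an action of a
finite group `G` by degree-preserving ring automorphisms and let `m = A_{≥1}`.
Then `η_G(m) ≤ β(A(G)^G)`, where `A(G)` is the polynomial ring over `A` in variables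
`x_g (g ∈ G)` of degree `1`, with `G` acting through its action on `A` together with
`g • x_h = x_{gh}`, and `A(G)^G` carries the induced grading. -/
theorem eta_le_beta_AG {G A : Type} [Group G] [Finite G] [CommRing A]
    [MulSemiringAction G A] (𝒜 : ℕ → AddSubgroup A) [GradedRing 𝒜]
    (hdeg : ∀ (g : G) (d : ℕ), ∀ a ∈ 𝒜 d, g • a ∈ 𝒜 d) :
    eta G (Ideal.span {a : A | ∃ d, 1 ≤ d ∧ a ∈ 𝒜 d}) ≤
      beta (AGgrading 𝒜) (fixedSubringOf (AGmap (G := G) (A := A))) :=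
  eta_le_beta_AG_general 𝒜
end
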